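/- arXiv:2112.12814 — 3 statements merged into one kernel-verified Lean document; each statement's English description precedes it below -/
import Mathlib

section
/- For 1 ≤ p < q < n and real numbers a, b, the determinant of the n×n matrix M(n,p,a,q,b), which has 1's on the diagonal, off-diagonal entries M[i,i+1] = M[i+1,i] = 1/2 for all i except M[p,p+1] = M[p+1,p] = a and M[q,q+1] = M[q+1,q] = b, and zeros elsewhere, equals (1/2^n)·(n−q+1)·[(p+1)(q−p+1) − 4a²p(q−p)] − (1/2^n)·(n−q)·4b²·[(p+1)(q−p) − 4a²p(q−p−1)]. -/
/-!
After scaling by `2`, `M(n,p,a,q,b)` becomes the symmetric tridiagonal matrix with diagonal `2`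
and off-diagonal entries `1`, except `2a` at `p` and `2b` at `q`. Expanding along the last row,
its leading principal minors satisfy `D (j + 2) = 2 D (j + 1) - c j ^ 2 D j`, so along each run of
off-diagonal entries `1` they form an arithmetic progression. The two defects splice three such
progressions together, starting from `D 0 = 1`, `D 1 = 2`.
-/

/-- `M(n,p,a,q,b)`: the symmetric tridiagonal `n×n` matrix (1-based positions)
with unit diagonal, off-diagonal pairs `1/2` except `a` at positions `(p,p+1)`
and `b` at positions `(q,q+1)`. -/
noncomputable def Mmask (n p q : ℕ) (a b : ℝ) : Matrix (Fin n) (Fin n) ℝ :=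
  Matrix.of fun i j =>
    if (i : ℕ) = j then 1
    else if (i : ℕ) + 1 = j ∨ (j : ℕ) + 1 = i then
      (if min (i : ℕ) j + 1 = p then a
       else if min (i : ℕ) j + 1 = q then b else 1/2)
    else 0

open Matrix

variable {R : Type*} [CommRing R]

lemma apply_add_eq_of_second_diff_eq_zero (D : ℕ → R) {m k : ℕ}
    (h : ∀ i ∈ Finset.Ico m (m + k), D (i + 2) - 2 * D (i + 1) + D i = 0) :
    ∀ j ≤ k + 1, D (m + j) = D m + j * (D (m + 1) - D m) := by
  intro j
  induction j using Nat.twoStepInduction with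
  | zero => simp
  | one => simp
  | more j ih₀ ih₁ =>
    intro hj
    have hj₂ := h (m + j) (Finset.mem_Ico.mpr ⟨by omega, by omega⟩)
    have ih₁ := ih₁ (by omega)
    rw [← add_assoc]
    push_cast at ih₁ ⊢
    linear_combination hj₂ + 2 * ih₁ - ih₀ (by omega)

def symmTridiag (d : R) (c : ℕ → R) (n : ℕ) : Matrix (Fin n) (Fin n) R :=
  Matrix.of fun i j =>
    if (i : ℕ) = j then d
    else if (i : ℕ) + 1 = j ∨ (j : ℕ) + 1 = i then c (min (i : ℕ) j)
    else 0

namespace symmTridiag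

variable (d : R) (c : ℕ → R)

lemma apply_eq_zero {n : ℕ} {i j : Fin n} (h : (j : ℕ) + 1 < i ∨ (i : ℕ) + 1 < j) :
    symmTridiag d c n i j = 0 := by
  simp only [symmTridiag, of_apply]
  split_ifs <;> first | rfl | omega

@[simp]
lemma submatrix_castSucc (n : ℕ) :
    (symmTridiag d c (n + 1)).submatrix Fin.castSucc Fin.castSucc = symmTridiag d c n := by
  ext i j
  simp [symmTridiag]

lemma det_zero : (symmTridiag d c 0).det = 1 := det_isEmpty

lemma det_one : (symmTridiag d c 1).det = d := by
  simp [symmTridiag]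

lemma det_succ_succ (n : ℕ) :
    (symmTridiag d c (n + 2)).det =
      d * (symmTridiag d c (n + 1)).det - c n ^ 2 * (symmTridiag d c n).det := by
  -- the minor of the subdiagonal entry of the last row has a single nonzero entry `c n` in its
  -- last column
  have hminor : ((symmTridiag d c (n + 2)).submatrix Fin.castSucc
      (Fin.last n).castSucc.succAbove).det = c n * (symmTridiag d c n).det := by
    rw [det_succ_column _ (Fin.last _), Fin.sum_univ_castSucc, Finset.sum_eq_zero fun i _ => by
      rw [submatrix_apply, apply_eq_zero _ _ (by simp), mul_zero, zero_mul]]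
    have hcol : (Fin.last n).castSucc.succAbove ∘ Fin.castSucc = Fin.castSucc ∘ Fin.castSucc :=
      funext fun k => Fin.succAbove_castSucc_of_lt _ _ (Fin.castSucc_lt_last k)
    simp only [submatrix_apply, Fin.succAbove_castSucc_self, Fin.succ_last, Fin.succAbove_last,
      submatrix_submatrix, hcol]
    rw [← submatrix_submatrix, submatrix_castSucc, submatrix_castSucc]
    simp [symmTridiag]
  rw [det_succ_row _ (Fin.last _), Fin.sum_univ_castSucc, Fin.sum_univ_castSucc,
    Finset.sum_eq_zero fun j _ => by rw [apply_eq_zero _ _ (by simp), mul_zero, zero_mul]]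
  simp only [Fin.succAbove_last, hminor, submatrix_castSucc]
  simp [symmTridiag]
  ring

lemma det_add_eq_of_eq_one {m k : ℕ} (hc : ∀ i ∈ Finset.Ico m (m + k), c i = 1) :
    ∀ j ≤ k + 1, (symmTridiag 2 c (m + j)).det = (symmTridiag 2 c m).det +
      j * ((symmTridiag 2 c (m + 1)).det - (symmTridiag 2 c m).det) :=
  apply_add_eq_of_second_diff_eq_zero (fun j => (symmTridiag 2 c j).det) fun i hi => by
    rw [det_succ_succ, hc i hi]
    ring

end symmTridiag

lemma Mmask_eq_smul_symmTridiag (n p q : ℕ) (a b : ℝ) :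
    Mmask n p q a b = (2⁻¹ : ℝ) •
      symmTridiag 2 (fun i => if i + 1 = p then 2 * a else if i + 1 = q then 2 * b else 1) n := by
  ext i j
  simp only [Mmask, symmTridiag, of_apply, Matrix.smul_apply, smul_eq_mul]
  split_ifs <;> first | omega | ring

lemma det_symmTridiag_two_of_two_defects {n p q : ℕ} (α β : ℝ)
    (hp : 1 ≤ p) (hpq : p < q) (hq : q < n) :
    (symmTridiag 2 (fun i => if i + 1 = p then α else if i + 1 = q then β else 1) n).det =
      ((n : ℝ) - q + 1) * ((p + 1) * ((q : ℝ) - p + 1) - α ^ 2 * p * ((q : ℝ) - p)) -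
      ((n : ℝ) - q) * β ^ 2 * ((p + 1) * ((q : ℝ) - p) - α ^ 2 * p * ((q : ℝ) - p - 1)) := by
  obtain ⟨s, rfl⟩ : ∃ s, p = s + 1 := ⟨p - 1, by omega⟩
  obtain ⟨t, rfl⟩ : ∃ t, q = s + 1 + t + 1 := ⟨q - s - 2, by omega⟩
  obtain ⟨k, rfl⟩ : ∃ k, n = s + 1 + t + 1 + (k + 1) := ⟨n - (s + t + 3), by omega⟩
  set c : ℕ → ℝ := fun i => if i + 1 = s + 1 then α else if i + 1 = s + 1 + t + 1 then β else 1
  set D : ℕ → ℝ := fun j => (symmTridiag 2 c j).det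
  have hc (i : ℕ) (hs : i ≠ s) (ht : i ≠ s + 1 + t) : c i = 1 := by simp [c, hs, ht]
  have progression {m k : ℕ} (hs : s < m ∨ m + k ≤ s) (ht : s + 1 + t < m ∨ m + k ≤ s + 1 + t) :
      ∀ j ≤ k + 1, D (m + j) = D m + j * (D (m + 1) - D m) :=
    symmTridiag.det_add_eq_of_eq_one c fun i hi => by
      rw [Finset.mem_Ico] at hi
      exact hc i (by omega) (by omega)
  have run₁ := progression (m := 0) (k := s) (by omega) (by omega)
  simp only [zero_add] at run₁
  have hD₀ : D 0 = 1 := symmTridiag.det_zero 2 c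
  have hD₁ : D 1 = 2 := symmTridiag.det_one 2 c
  have hDs : D s = s + 1 := by rw [run₁ s (by omega), hD₀, hD₁]; ring
  have hDp : D (s + 1) = s + 2 := by rw [run₁ (s + 1) le_rfl, hD₀, hD₁]; push_cast; ring
  have hα : c s = α := by simp [c]
  have hβ : c (s + 1 + t) = β := by simp [c, show s + 1 + t ≠ s by omega]
  have hDp₁ : D (s + 1 + 1) = 2 * D (s + 1) - α ^ 2 * D s := hα ▸ symmTridiag.det_succ_succ 2 c s
  have run₂ := progression (m := s + 1) (k := t) (by omega) (by omega)
  have hDq : D (s + 1 + t + 1) = D (s + 1) + (t + 1 : ℕ) * (D (s + 1 + 1) - D (s + 1)) :=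
    run₂ (t + 1) le_rfl
  have hDq₁ : D (s + 1 + t + 1 + 1) = 2 * D (s + 1 + t + 1) - β ^ 2 * D (s + 1 + t) :=
    hβ ▸ symmTridiag.det_succ_succ 2 c (s + 1 + t)
  have run₃ := progression (m := s + 1 + t + 1) (k := k) (by omega) (by omega)
  change D _ = _
  rw [run₃ (k + 1) le_rfl, hDq₁, hDq, run₂ t (by omega), hDp₁, hDp, hDs]
  push_cast
  ring

/-- Determinant formula for `M(n,p,a,q,b)`. -/
theorem det_Mmask (n p q : ℕ) (a b : ℝ)
    (hp : 1 ≤ p) (hpq : p < q) (hq : q < n) :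
    (Mmask n p q a b).det =
      (1 / 2 ^ n) * ((n : ℝ) - q + 1) *
        (((p : ℝ) + 1) * ((q : ℝ) - p + 1) - 4 * a^2 * p * ((q : ℝ) - p)) -
      (1 / 2 ^ n) * ((n : ℝ) - q) * 4 * b^2 *
        (((p : ℝ) + 1) * ((q : ℝ) - p) - 4 * a^2 * p * ((q : ℝ) - p - 1)) := by
  rw [Mmask_eq_smul_symmTridiag, det_smul, Fintype.card_fin, inv_pow, ← one_div,
    det_symmTridiag_two_of_two_defects _ _ hp hpq hq]
  ring
end

section
/- Let n ≥ 4, 1 ≤ p < q < n, and a ∈ [1/2, a*(n,p)] where a*(n,p) = (1/2)√((1+1/p)(1+1/(n−p))). Then for b ≥ 1/2, the matrix M(n,p,a,q,b) is positive semidefinite if and only if b ≤ b*(n,p,a,q), where b*(n,p,a,q) = (1/2)·√( [(n−q+1)((p+1)(q−p+1) − 4a²p(q−p))] / [(n−q)((p+1)(q−p) − 4a²p(q−p−1))] ). -/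
/-- `a*(n,p)`. -/
noncomputable def astar (n p : ℕ) : ℝ :=
  (1 / 2) * Real.sqrt ((1 + 1 / (p : ℝ)) * (1 + 1 / ((n : ℝ) - p)))

/-- `b*(n,p,a,q)`. -/
noncomputable def bstar (n p : ℕ) (a : ℝ) (q : ℕ) : ℝ :=
  (1 / 2) * Real.sqrt (
    (((n : ℝ) - q + 1) *
      (((p : ℝ) + 1) * ((q : ℝ) - p + 1) - 4 * a^2 * p * ((q : ℝ) - p))) /
    (((n : ℝ) - q) *
      (((p : ℝ) + 1) * ((q : ℝ) - p) - 4 * a^2 * p * ((q : ℝ) - p - 1))))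

open Finset Matrix

def tridiagEntry (c : ℕ → ℝ) (i j : ℕ) : ℝ :=
  if i = j then 1 else if i + 1 = j ∨ j + 1 = i then c (min i j) else 0

noncomputable def unitTridiag (n : ℕ) (c : ℕ → ℝ) : Matrix (Fin n) (Fin n) ℝ :=
  Matrix.of fun i j => tridiagEntry c i j

theorem tridiagEntry_comm (c : ℕ → ℝ) (i j : ℕ) : tridiagEntry c i j = tridiagEntry c j i := by
  unfold tridiagEntry
  rw [min_comm]
  split_ifs <;> first | rfl | omega

theorem tridiagEntry_last (c : ℕ → ℝ) {i n : ℕ} (hi : i ≤ n) :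
    tridiagEntry c i (n + 1) = if i = n then c n else 0 := by
  unfold tridiagEntry
  split_ifs <;> first | (exfalso; omega) | (congr 1; omega) | rfl

theorem unitTridiag_isHermitian (n : ℕ) (c : ℕ → ℝ) : (unitTridiag n c).IsHermitian := by
  ext i j
  simp [unitTridiag, tridiagEntry_comm c i]

theorem sum_mul_sum_tridiagEntry (c y : ℕ → ℝ) (n : ℕ) :
    ∑ i ∈ range (n + 1), y i * ∑ j ∈ range (n + 1), tridiagEntry c i j * y j =
      ∑ k ∈ range (n + 1), y k ^ 2 + 2 * ∑ k ∈ range n, c k * y k * y (k + 1) := by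
  induction n with
  | zero => simp [tridiagEntry, sq]
  | succ n ih =>
    have hlast : ∑ i ∈ range (n + 1), y i * tridiagEntry c i (n + 1) = c n * y n := by
      rw [sum_congr rfl fun i hi =>
        by rw [tridiagEntry_last c (Nat.lt_succ_iff.1 (mem_range.1 hi))]]
      simp [mul_comm]
    have hlast' : ∑ j ∈ range (n + 1), tridiagEntry c (n + 1) j * y j = c n * y n := by
      simpa only [tridiagEntry_comm c (n + 1), mul_comm] using hlast
    simp only [sum_range_succ _ (n + 1), mul_add, sum_add_distrib, ← mul_assoc, ← sum_mul, ih,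
      hlast, hlast', sum_range_succ (fun k => c k * y k * y (k + 1)) n]
    simp only [tridiagEntry, if_true]
    ring

theorem dotProduct_unitTridiag_mulVec (c y : ℕ → ℝ) (n : ℕ) :
    (fun i : Fin (n + 1) => y i) ⬝ᵥ (unitTridiag (n + 1) c *ᵥ fun i => y i) =
      ∑ k ∈ range (n + 1), y k ^ 2 + 2 * ∑ k ∈ range n, c k * y k * y (k + 1) := by
  rw [← sum_mul_sum_tridiagEntry]
  simp only [dotProduct, mulVec, unitTridiag, of_apply, Finset.sum_range]

-- The determinant of the leading `k × k` block of `unitTridiag n c`; only the recurrence is used.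
def tridiagMinor (c : ℕ → ℝ) : ℕ → ℝ
  | 0 => 1
  | 1 => 1
  | k + 2 => tridiagMinor c (k + 1) - c k ^ 2 * tridiagMinor c k

theorem sum_sq_add_eq_sum_minor_mul_sq (c y : ℕ → ℝ) (n : ℕ)
    (hd : ∀ k ≤ n, tridiagMinor c k ≠ 0) :
    ∑ k ∈ range (n + 1), y k ^ 2 + 2 * ∑ k ∈ range n, c k * y k * y (k + 1) =
      ∑ k ∈ range n, tridiagMinor c (k + 1) / tridiagMinor c k *
          (y k + c k * tridiagMinor c k / tridiagMinor c (k + 1) * y (k + 1)) ^ 2 +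
        tridiagMinor c (n + 1) / tridiagMinor c n * y n ^ 2 := by
  induction n with
  | zero => simp [tridiagMinor]
  | succ n ih =>
    have h₀ := hd n n.le_succ
    have h₁ := hd (n + 1) le_rfl
    have hstep : tridiagMinor c (n + 1) / tridiagMinor c n * y n ^ 2 + 2 * c n * y n * y (n + 1)
          + y (n + 1) ^ 2 =
        tridiagMinor c (n + 1) / tridiagMinor c n *
            (y n + c n * tridiagMinor c n / tridiagMinor c (n + 1) * y (n + 1)) ^ 2 +
          tridiagMinor c (n + 2) / tridiagMinor c (n + 1) * y (n + 1) ^ 2 := by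
      rw [tridiagMinor]
      field_simp
      ring
    have ih' := ih fun k hk => hd k (by omega)
    simp only [sum_range_succ] at ih' ⊢
    linear_combination ih' + hstep

theorem posSemidef_unitTridiag_of_minor (c : ℕ → ℝ) (n : ℕ)
    (hd : ∀ k ≤ n, 0 < tridiagMinor c k) (hdn : 0 ≤ tridiagMinor c (n + 1)) :
    (unitTridiag (n + 1) c).PosSemidef := by
  refine PosSemidef.of_dotProduct_mulVec_nonneg (unitTridiag_isHermitian _ c) fun x => ?_
  set y : ℕ → ℝ := fun k => if h : k < n + 1 then x ⟨k, h⟩ else 0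
  have hx : x = fun i : Fin (n + 1) => y i := by funext i; simp only [y, dif_pos i.2]
  rw [star_trivial, hx, dotProduct_unitTridiag_mulVec,
    sum_sq_add_eq_sum_minor_mul_sq c y n fun k hk => (hd k hk).ne']
  have hd' : ∀ k ≤ n + 1, 0 ≤ tridiagMinor c k := fun k hk =>
    (Nat.lt_or_eq_of_le hk).elim (fun h => (hd k (by omega)).le) (· ▸ hdn)
  refine add_nonneg (sum_nonneg fun k hk => ?_) ?_
  · have hk := mem_range.1 hk
    have h₀ := hd' k (by omega)
    have h₁ := hd' (k + 1) (by omega)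
    positivity
  · have hn := hd' n (by omega)
    positivity

-- Every square of `sum_sq_add_eq_sum_minor_mul_sq` vanishes at this vector.
noncomputable def tridiagNullVec (c : ℕ → ℝ) (k : ℕ) : ℝ :=
  (-1) ^ k * tridiagMinor c k / ∏ i ∈ range k, c i

theorem tridiagNullVec_add_eq_zero {c : ℕ → ℝ} {k : ℕ} (hc : ∀ i ≤ k, c i ≠ 0)
    (hd : tridiagMinor c (k + 1) ≠ 0) :
    tridiagNullVec c k + c k * tridiagMinor c k / tridiagMinor c (k + 1) *
      tridiagNullVec c (k + 1) = 0 := by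
  have hP : ∏ i ∈ range k, c i ≠ 0 := prod_ne_zero_iff.2 fun i hi => hc i (mem_range.1 hi).le
  have hck := hc k le_rfl
  simp only [tridiagNullVec, prod_range_succ, pow_succ]
  field_simp
  ring

theorem tridiagNullVec_mul_succ_neg {c : ℕ → ℝ} {k : ℕ} (hc : ∀ i ≤ k, 0 < c i)
    (hd : 0 < tridiagMinor c k) (hd' : 0 < tridiagMinor c (k + 1)) :
    tridiagNullVec c k * tridiagNullVec c (k + 1) < 0 := by
  have hP : 0 < ∏ i ∈ range k, c i := prod_pos fun i hi => hc i (mem_range.1 hi).le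
  have hck := hc k le_rfl
  have : tridiagNullVec c k * tridiagNullVec c (k + 1) =
      -(tridiagMinor c k * tridiagMinor c (k + 1) / ((∏ i ∈ range k, c i) ^ 2 * c k)) := by
    simp only [tridiagNullVec, prod_range_succ, pow_succ]
    field_simp
    rw [← pow_mul, pow_mul', neg_one_sq, one_pow]
  rw [this, neg_lt_zero]
  positivity

theorem sum_update_mul (c y : ℕ → ℝ) {n j : ℕ} (hj : j < n) (b : ℝ) :
    ∑ k ∈ range n, Function.update c j b k * y k * y (k + 1) =
      ∑ k ∈ range n, c k * y k * y (k + 1) + (b - c j) * y j * y (j + 1) := by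
  rw [← sub_eq_iff_eq_add', ← sum_sub_distrib, sum_eq_single_of_mem j (mem_range.2 hj)]
  · simp only [Function.update_self]; ring
  · intro k _ hk
    simp [Function.update_of_ne hk]

theorem not_posSemidef_unitTridiag_update {c : ℕ → ℝ} {n j : ℕ} {b : ℝ}
    (hc : ∀ k < n, 0 < c k) (hd : ∀ k ≤ n, 0 < tridiagMinor c k)
    (hdn : tridiagMinor c (n + 1) = 0) (hj : j < n) (hb : c j < b) :
    ¬ (unitTridiag (n + 1) (Function.update c j b)).PosSemidef := by
  intro h
  set y := tridiagNullVec c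
  have hform : ∑ k ∈ range (n + 1), y k ^ 2 + 2 * ∑ k ∈ range n, c k * y k * y (k + 1) = 0 := by
    rw [sum_sq_add_eq_sum_minor_mul_sq c y n fun k hk => (hd k hk).ne', hdn, zero_div, zero_mul,
      add_zero]
    refine sum_eq_zero fun k hk => ?_
    have hk := mem_range.1 hk
    rw [tridiagNullVec_add_eq_zero (fun i hi => (hc i (by omega)).ne') (hd (k + 1) hk).ne']
    ring
  have hneg :=
    tridiagNullVec_mul_succ_neg (fun i hi => hc i (by omega)) (hd j hj.le) (hd (j + 1) hj)
  have hnonneg := h.dotProduct_mulVec_nonneg fun i => y i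
  rw [star_trivial, dotProduct_unitTridiag_mulVec, sum_update_mul c y hj] at hnonneg
  nlinarith

theorem two_pow_mul_tridiagMinor_of_half {c : ℕ → ℝ} {m N : ℕ}
    (hc : ∀ k, m ≤ k → k + 2 ≤ N → c k = 1 / 2) {k : ℕ} (hmk : m ≤ k) (hkN : k ≤ N) :
    2 ^ k * tridiagMinor c k = 2 ^ m * tridiagMinor c m +
      (k - m : ℝ) * (2 ^ (m + 1) * tridiagMinor c (m + 1) - 2 ^ m * tridiagMinor c m) := by
  obtain ⟨i, rfl⟩ := Nat.exists_eq_add_of_le hmk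
  induction i using Nat.twoStepInduction with
  | zero => simp
  | one => push_cast; ring
  | more i ih ih' =>
    have h₀ := ih (by omega) (by omega)
    have h₁ := ih' (by omega) (by omega)
    rw [← add_assoc, tridiagMinor, hc (m + i) (by omega) (by omega)]
    push_cast at h₀ h₁ ⊢
    linear_combination 2 * h₁ - h₀

theorem add_mul_pos_of_lt {α δ s t : ℝ} (hα : 0 < α) (hs : 0 ≤ α + s * δ) (ht : 0 ≤ t)
    (hts : t < s) : 0 < α + t * δ := by
  rcases le_or_gt 0 δ with hδ | hδ <;> nlinarith

-- `maskCoeff p q a b k` is the `(k, k+1)` entry of `Mmask`, indices from `0`.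
noncomputable def maskCoeff (p q : ℕ) (a b : ℝ) (k : ℕ) : ℝ :=
  if k + 1 = p then a else if k + 1 = q then b else 1 / 2

theorem Mmask_eq_unitTridiag (n p q : ℕ) (a b : ℝ) :
    Mmask n p q a b = unitTridiag n (maskCoeff p q a b) := rfl

-- `2 ^ k` times the `k`-th minor of `Mmask` is `midMinor p a k` for `p ≤ k ≤ q`
-- and `tailMinor p q a b k` for `q ≤ k`.
noncomputable def midMinor (p : ℕ) (a t : ℝ) : ℝ :=
  p + 1 + (t - p) * (p + 1 - 4 * a ^ 2 * p)

noncomputable def tailMinor (p q : ℕ) (a b t : ℝ) : ℝ :=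
  midMinor p a q + (t - q) * (midMinor p a q - 4 * b ^ 2 * midMinor p a (q - 1))

section maskCoeff

variable {p q : ℕ} {a b : ℝ}

theorem maskCoeff_eq_half {k : ℕ} (hp : k + 1 ≠ p) (hq : k + 1 ≠ q) :
    maskCoeff p q a b k = 1 / 2 := by
  simp [maskCoeff, hp, hq]

theorem maskCoeff_pos (ha : 0 < a) (hb : 0 < b) (k : ℕ) : 0 < maskCoeff p q a b k := by
  unfold maskCoeff
  split_ifs <;> positivity

theorem maskCoeff_eq_update (hpq : p < q) (b' : ℝ) :
    maskCoeff p q a b = Function.update (maskCoeff p q a b') (q - 1) b := by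
  funext k
  by_cases hk : k = q - 1
  · subst hk
    simp [maskCoeff, show q - 1 + 1 = q by omega, hpq.ne']
  · simp only [maskCoeff, Function.update_of_ne hk]
    split_ifs <;> first | rfl | omega

theorem two_pow_mul_tridiagMinor_maskCoeff_of_le (hpq : p < q) {k : ℕ} (hk : k ≤ p) :
    2 ^ k * tridiagMinor (maskCoeff p q a b) k = k + 1 := by
  rw [two_pow_mul_tridiagMinor_of_half (m := 0) (N := p)
    (fun k _ hk => maskCoeff_eq_half (by omega) (by omega)) k.zero_le hk]
  norm_num [tridiagMinor, add_comm]

theorem two_pow_mul_tridiagMinor_maskCoeff_of_mem_Icc (hp : 1 ≤ p) (hpq : p < q) {k : ℕ}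
    (hpk : p ≤ k) (hkq : k ≤ q) :
    2 ^ k * tridiagMinor (maskCoeff p q a b) k = midMinor p a k := by
  obtain ⟨r, rfl⟩ := Nat.exists_eq_add_of_le' hp
  have hstep : 2 ^ (r + 2) * tridiagMinor (maskCoeff (r + 1) q a b) (r + 2) =
      2 * (r + 2) - 4 * a ^ 2 * (r + 1) := by
    have h₀ := two_pow_mul_tridiagMinor_maskCoeff_of_le (a := a) (b := b) hpq r.le_succ
    have h₁ := two_pow_mul_tridiagMinor_maskCoeff_of_le (a := a) (b := b) hpq le_rfl
    rw [tridiagMinor, show maskCoeff (r + 1) q a b r = a by simp [maskCoeff]]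
    push_cast at h₀ h₁
    linear_combination 2 * h₁ - 4 * a ^ 2 * h₀
  rw [two_pow_mul_tridiagMinor_of_half (N := q)
    (fun k hk hkq => maskCoeff_eq_half (by omega) (by omega)) hpk hkq, hstep,
    two_pow_mul_tridiagMinor_maskCoeff_of_le hpq le_rfl, midMinor]
  push_cast
  ring

theorem two_pow_mul_tridiagMinor_maskCoeff_of_ge (hp : 1 ≤ p) (hpq : p < q) {k : ℕ}
    (hqk : q ≤ k) :
    2 ^ k * tridiagMinor (maskCoeff p q a b) k = tailMinor p q a b k := by
  obtain ⟨r, rfl⟩ : ∃ r, q = r + 1 := ⟨q - 1, by omega⟩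
  have h₀ := two_pow_mul_tridiagMinor_maskCoeff_of_mem_Icc (a := a) (b := b) hp hpq
    (show p ≤ r by omega) r.le_succ
  have h₁ := two_pow_mul_tridiagMinor_maskCoeff_of_mem_Icc (a := a) (b := b) hp hpq hpq.le le_rfl
  have hstep : 2 ^ (r + 2) * tridiagMinor (maskCoeff p (r + 1) a b) (r + 2) =
      2 * midMinor p a (r + 1) - 4 * b ^ 2 * midMinor p a r := by
    rw [tridiagMinor, show maskCoeff p (r + 1) a b r = b by simp [maskCoeff]; omega]
    push_cast at h₀ h₁
    linear_combination 2 * h₁ - 4 * b ^ 2 * h₀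
  rw [two_pow_mul_tridiagMinor_of_half (N := k)
    (fun k hk _ => maskCoeff_eq_half (by omega) (by omega)) hqk le_rfl, hstep, h₁, tailMinor]
  push_cast
  rw [add_sub_cancel_right]
  ring

theorem tridiagMinor_maskCoeff_pos (hp : 1 ≤ p) (hpq : p < q) {n : ℕ} (hqn : q < n)
    (hmid : ∀ t : ℝ, p ≤ t → t < n → 0 < midMinor p a t) (htail : 0 ≤ tailMinor p q a b n) :
    ∀ k < n, 0 < tridiagMinor (maskCoeff p q a b) k := by
  intro k hkn
  refine pos_of_mul_pos_right (a := (2 : ℝ) ^ k) ?_ (by positivity)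
  rcases le_total k p with hkp | hpk
  · rw [two_pow_mul_tridiagMinor_maskCoeff_of_le hpq hkp]
    positivity
  rcases le_total k q with hkq | hqk
  · rw [two_pow_mul_tridiagMinor_maskCoeff_of_mem_Icc hp hpq hpk hkq]
    exact hmid k (by exact_mod_cast hpk) (by exact_mod_cast hkn)
  · rw [two_pow_mul_tridiagMinor_maskCoeff_of_ge hp hpq hqk]
    have hq : 0 < midMinor p a q := hmid q (by exact_mod_cast hpq.le) (by exact_mod_cast hqn)
    refine add_mul_pos_of_lt hq htail ?_ ?_
    · simpa using hqk
    · simpa using hkn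

end maskCoeff

theorem midMinor_pos {n p : ℕ} {a : ℝ} (hp : 1 ≤ p) (hpn : p < n) (ha : 0 ≤ a)
    (ha' : a ≤ astar n p) {t : ℝ} (ht : p ≤ t) (htn : t < n) : 0 < midMinor p a t := by
  have hp' : (0 : ℝ) < p := by exact_mod_cast hp
  have hnp : (0 : ℝ) < n - p := sub_pos.2 (by exact_mod_cast hpn)
  have hsq : a ^ 2 ≤ (p + 1) * (n - p + 1) / (4 * p * (n - p)) := by
    calc a ^ 2 ≤ astar n p ^ 2 := pow_le_pow_left₀ ha ha' 2
      _ = (p + 1) * (n - p + 1) / (4 * p * (n - p)) := by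
        rw [astar, mul_pow, Real.sq_sqrt (by positivity)]
        field_simp
        ring
  rw [le_div_iff₀ (by positivity)] at hsq
  refine add_mul_pos_of_lt (s := n - p) (by positivity) ?_ (by linarith) (by linarith)
  nlinarith

section bstar

variable {n p q : ℕ} {a : ℝ}

theorem bstar_eq :
    bstar n p a q = 1 / 2 * √((n - q + 1) * midMinor p a q / ((n - q) * midMinor p a (q - 1))) := by
  unfold bstar midMinor
  ring_nf

theorem bstar_pos (hqn : q < n) (hnum : 0 < midMinor p a q) (hden : 0 < midMinor p a (q - 1)) :
    0 < bstar n p a q := by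
  have hnq : (0 : ℝ) < n - q := sub_pos.2 (by exact_mod_cast hqn)
  rw [bstar_eq]
  positivity

theorem tailMinor_bstar (hqn : q < n) (hnum : 0 ≤ midMinor p a q)
    (hden : 0 < midMinor p a (q - 1)) : tailMinor p q a (bstar n p a q) n = 0 := by
  have hnq : (0 : ℝ) < n - q := sub_pos.2 (by exact_mod_cast hqn)
  rw [tailMinor, bstar_eq, mul_pow, Real.sq_sqrt (by positivity)]
  field_simp
  ring

theorem le_bstar_iff {b : ℝ} (hb : 0 ≤ b) (hqn : q < n) (hnum : 0 ≤ midMinor p a q)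
    (hden : 0 < midMinor p a (q - 1)) : b ≤ bstar n p a q ↔ 0 ≤ tailMinor p q a b n := by
  have hnq : (0 : ℝ) < n - q := sub_pos.2 (by exact_mod_cast hqn)
  have hβ := tailMinor_bstar hqn hnum hden
  rw [← sq_le_sq₀ hb (by rw [bstar]; positivity)]
  unfold tailMinor at hβ ⊢
  constructor <;> intro h <;> nlinarith [mul_pos hnq hden]

end bstar

section Mmask

variable {n p q : ℕ} {a b : ℝ}

theorem posSemidef_unitTridiag_maskCoeff (hp : 1 ≤ p) (hpq : p < q) (hqn : q < n)
    (hmid : ∀ t : ℝ, p ≤ t → t < n → 0 < midMinor p a t) (htail : 0 ≤ tailMinor p q a b n) :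
    (unitTridiag n (maskCoeff p q a b)).PosSemidef := by
  obtain ⟨m, rfl⟩ : ∃ m, n = m + 1 := ⟨n - 1, by omega⟩
  have htop := two_pow_mul_tridiagMinor_maskCoeff_of_ge (a := a) (b := b) hp hpq hqn.le
  exact posSemidef_unitTridiag_of_minor _ m
    (fun k hk => tridiagMinor_maskCoeff_pos hp hpq hqn hmid htail k (by omega))
    ((mul_nonneg_iff_of_pos_left (by positivity)).1 (htop ▸ htail))

theorem not_posSemidef_unitTridiag_maskCoeff (hp : 1 ≤ p) (hpq : p < q) (hqn : q < n)
    (ha : 0 < a) (hmid : ∀ t : ℝ, p ≤ t → t < n → 0 < midMinor p a t)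
    (hnum : 0 < midMinor p a q) (hden : 0 < midMinor p a (q - 1)) (hb : bstar n p a q < b) :
    ¬ (unitTridiag n (maskCoeff p q a b)).PosSemidef := by
  obtain ⟨m, rfl⟩ : ∃ m, n = m + 1 := ⟨n - 1, by omega⟩
  set β := bstar (m + 1) p a q
  have hβ := tailMinor_bstar hqn hnum.le hden
  have htop := two_pow_mul_tridiagMinor_maskCoeff_of_ge (a := a) (b := β) hp hpq hqn.le
  rw [maskCoeff_eq_update hpq β]
  exact not_posSemidef_unitTridiag_update
    (fun k _ => maskCoeff_pos ha (bstar_pos hqn hnum hden) k)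
    (fun k hk => tridiagMinor_maskCoeff_pos hp hpq hqn hmid hβ.ge k (by omega))
    ((mul_eq_zero.1 (htop.trans hβ)).resolve_left (by positivity)) (by omega)
    (by simpa [maskCoeff, show q - 1 + 1 = q by omega, hpq.ne'] using hb)

end Mmask

theorem Mmask_posSemidef_iff_le_bstar_general
    (n p q : ℕ) (a b : ℝ) (hp : 1 ≤ p) (hpq : p < q) (hq : q < n)
    (ha : 1/2 ≤ a) (ha' : a ≤ astar n p) (hb : 1/2 ≤ b) :
    (Mmask n p q a b).PosSemidef ↔ b ≤ bstar n p a q := by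
  have hmid : ∀ t : ℝ, p ≤ t → t < n → 0 < midMinor p a t :=
    fun t => midMinor_pos hp (hpq.trans hq) (by linarith) ha'
  have hqn : (q : ℝ) < n := by exact_mod_cast hq
  have hnum : 0 < midMinor p a q := hmid q (by exact_mod_cast hpq.le) hqn
  have hden : 0 < midMinor p a (q - 1) :=
    hmid _ (by rw [le_sub_iff_add_le]; exact_mod_cast hpq) (by linarith)
  rw [Mmask_eq_unitTridiag]
  constructor
  · intro hpsd
    by_contra! hlt
    exact not_posSemidef_unitTridiag_maskCoeff hp hpq hq (by linarith) hmid hnum hden hlt hpsd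
  · intro hle
    exact posSemidef_unitTridiag_maskCoeff hp hpq hq hmid
      ((le_bstar_iff (by linarith) hq hnum.le hden).1 hle)

/-- For `a ∈ [1/2, a*(n,p)]` and `b ≥ 1/2`, `M(n,p,a,q,b) ⪰ 0` iff `b ≤ b*(n,p,a,q)`. -/
theorem Mmask_posSemidef_iff_le_bstar
    (n p q : ℕ) (a b : ℝ) (hn : 4 ≤ n) (hp : 1 ≤ p) (hpq : p < q) (hq : q < n)
    (ha : 1/2 ≤ a) (ha' : a ≤ astar n p) (hb : 1/2 ≤ b) :
    (Mmask n p q a b).PosSemidef ↔ b ≤ bstar n p a q :=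
  Mmask_posSemidef_iff_le_bstar_general n p q a b hp hpq hq ha ha' hb
end

section
/- Suppose real numbers d_i, d_j > 0 and α_i, α_j, α_1 satisfy d_i > d_j, α_i² > α_j², and α_1 ≥ Σ_{k∈T} α_k²/d_k + (α_i² − α_j²)/(d_i − d_j) for a finite set T of indices with positive d_k. Then d_i − α_i²/(α_1 − Σ_{k∈T} α_k²/d_k) ≥ d_j − α_j²/(α_1 − Σ_{k∈T} α_k²/d_k). -/
lemma sub_div_le_sub_div_of_div_le {a b x y s : ℝ} (hs : 0 < s) (hyx : y < x)
    (h : (a - b) / (x - y) ≤ s) : y - b / s ≤ x - a / s := by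
  have hab : (a - b) / s ≤ x - y := (div_le_comm₀ (sub_pos.2 hyx) hs).1 h
  rw [sub_div] at hab
  linarith

theorem schur_diag_order_preserved_general
    (ι : Type*) (T : Finset ι)
    (d : ι → ℝ) (α : ι → ℝ)
    (di dj αi αj α₁ : ℝ)
    (hdij : dj < di)
    (hα₁ : (∑ k ∈ T, (α k)^2 / d k) + (αi^2 - αj^2) / (di - dj) ≤ α₁)
    (hden : 0 < α₁ - ∑ k ∈ T, (α k)^2 / d k) :
    dj - αj^2 / (α₁ - ∑ k ∈ T, (α k)^2 / d k) ≤
      di - αi^2 / (α₁ - ∑ k ∈ T, (α k)^2 / d k) :=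
  sub_div_le_sub_div_of_div_le hden hdij (by linarith)

/-- Key inequality for greedy optimality on arrowhead matrices: the ordering of
Schur-complement diagonal entries is preserved when `α₁` is sufficiently large. -/
theorem schur_diag_order_preserved
    (ι : Type*) [DecidableEq ι] (T : Finset ι)
    (d : ι → ℝ) (α : ι → ℝ) (hdT : ∀ k ∈ T, 0 < d k)
    (i j : ι) (di dj αi αj α₁ : ℝ)
    (hdi : 0 < di) (hdj : 0 < dj) (hdij : dj < di) (hαij : αj^2 < αi^2)
    (hα₁ : (∑ k ∈ T, (α k)^2 / d k) + (αi^2 - αj^2) / (di - dj) ≤ α₁)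
    (hden : 0 < α₁ - ∑ k ∈ T, (α k)^2 / d k) :
    dj - αj^2 / (α₁ - ∑ k ∈ T, (α k)^2 / d k) ≤
      di - αi^2 / (α₁ - ∑ k ∈ T, (α k)^2 / d k) :=
  schur_diag_order_preserved_general ι T d α di dj αi αj α₁ hdij hα₁ hden
end
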